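/- arXiv:1008.1469 — 2 statements merged into one kernel-verified Lean document; each statement's English description precedes it below -/
import Mathlib

section
/- For all nonnegative integers n, the sum over k from 0 to floor(n/2) of [n+k choose k]_{q^2} * [n+1 choose 2k+1]_q * q^{C(n-2k, 2)} equals [2n choose n]_q, as an identity of polynomials in q. -/
open Finset

/-- The Gaussian (q-)binomial coefficient `[a choose b]_q`, defined as
`∏_{i=1}^{b} (1 - q^(a-i+1)) / (1 - q^i)` (which is `0` when `b > a`). -/
noncomputable def qbinom (q : RatFunc ℚ) (a b : ℕ) : RatFunc ℚ :=
  ∏ i ∈ Finset.range b, (1 - q ^ ((a : ℤ) - i)) / (1 - q ^ ((i : ℤ) + 1))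

/-!
A q-Zeilberger (WZ) argument. With `F n k` the summand and `G` the certificate below,
`(1 - q^(n+1))² (1 - q^(2n+2)) F (n+1) k - (1 - q^(2n+1)) (1 - q^(2n+2))² F n k`
`= G n (k+1) - G n k`;
once every q-binomial in it is written as a rational multiple of `[n+k, k]_{q²} [n+1, 2k]_q`
this is an identity of rational functions in `q`, `q^k`, `q^(n-2k)`.
Summing over `k` telescopes, so `S n = ∑ k, F n k` satisfies
`(1 - q^(n+1))² S (n+1) = (1 - q^(2n+1)) (1 - q^(2n+2)) S n`,
the same recurrence as `[2n, n]_q`, and `S 0 = 1 = [0, 0]_q`.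
-/

open RatFunc

section
variable (p : RatFunc ℚ)

theorem qbinom_succ_succ (a b : ℕ) :
    qbinom p (a + 1) (b + 1) = (1 - p ^ (a + 1)) / (1 - p ^ (b + 1)) * qbinom p a b := by
  simp only [qbinom, prod_div_distrib]
  rw [prod_range_succ' _ b, prod_range_succ _ b, mul_div_mul_comm, mul_comm]
  push_cast [add_sub_add_right_eq_sub, sub_zero]
  norm_cast

theorem qbinom_eq_zero_of_lt {a b : ℕ} (h : a < b) : qbinom p a b = 0 :=
  prod_eq_zero (mem_range.2 h) (by simp)

theorem qbinom_succ_right (a b : ℕ) :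
    qbinom p a (b + 1) = qbinom p a b * (1 - p ^ (a - b)) / (1 - p ^ (b + 1)) := by
  rcases le_or_gt b a with h | h
  · rw [qbinom, prod_range_succ, ← qbinom, mul_div_assoc, ← Nat.cast_sub h, zpow_natCast]
    norm_cast
  · simp [qbinom_eq_zero_of_lt p h, qbinom_eq_zero_of_lt p (h.trans (Nat.lt_succ_self b))]

theorem qbinom_succ_self {a : ℕ} (h : 1 - p ^ (a + 1) ≠ 0) :
    qbinom p (a + 1) (a + 1) = qbinom p a a := by
  rw [qbinom_succ_succ, div_self h, one_mul]

theorem qbinom_succ_left (hp : ∀ m ≠ 0, 1 - p ^ m ≠ 0) {a b : ℕ} (hb : b ≤ a) :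
    qbinom p (a + 1) b = (1 - p ^ (a + 1)) / (1 - p ^ (a + 1 - b)) * qbinom p a b := by
  have h₁ := hp (a + 1 - b) (by omega)
  have h₂ := hp (b + 1) (by omega)
  have h := (qbinom_succ_right p (a + 1) b).symm.trans (qbinom_succ_succ p a b)
  field_simp at h ⊢
  linear_combination h
end

theorem one_sub_X_pow_ne_zero {K : Type*} [Field K] {m : ℕ} (hm : m ≠ 0) :
    (1 : RatFunc K) - X ^ m ≠ 0 := by
  refine sub_ne_zero.2 fun h => hm ?_
  have := congrArg intDegree h
  rwa [intDegree_one, ← algebraMap_X, ← map_pow, intDegree_polynomial,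
    Polynomial.natDegree_X_pow, eq_comm, Nat.cast_eq_zero] at this

theorem one_sub_X_sq_pow_ne_zero {K : Type*} [Field K] {m : ℕ} (hm : m ≠ 0) :
    (1 : RatFunc K) - (X ^ 2) ^ m ≠ 0 := by
  rw [← pow_mul]
  exact one_sub_X_pow_ne_zero (by positivity)

theorem succ_choose_two (j : ℕ) : (j + 1).choose 2 = j.choose 2 + j := by
  rw [Nat.choose_succ_succ, Nat.choose_one_right, add_comm]

namespace QSun

noncomputable def summand (n k : ℕ) : RatFunc ℚ :=
  qbinom (X ^ 2) (n + k) k * qbinom X (n + 1) (2 * k + 1) * X ^ (n - 2 * k).choose 2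

noncomputable def certificate (n k : ℕ) : RatFunc ℚ :=
  -((1 - X ^ (2 * k)) ^ 2 * (1 - X ^ (3 * n + 3)) * qbinom (X ^ 2) (n + k) k *
    qbinom X (n + 1) (2 * k) * X ^ (n + 2 - 2 * k).choose 2)

theorem summand_eq_zero {n k : ℕ} (h : n < 2 * k) : summand n k = 0 := by
  rw [summand, qbinom_eq_zero_of_lt X (by omega : n + 1 < 2 * k + 1), mul_zero, zero_mul]

theorem certificate_eq_zero {n k : ℕ} (h : n + 1 < 2 * k) : certificate n k = 0 := by
  rw [certificate, qbinom_eq_zero_of_lt X h, mul_zero, zero_mul, neg_zero]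

theorem certificate_zero_right (n : ℕ) : certificate n 0 = 0 := by
  simp [certificate]

theorem telescoping_of_two_mul_le {n k : ℕ} (h : 2 * k ≤ n) :
    (1 - X ^ (n + 1)) ^ 2 * (1 - X ^ (2 * n + 2)) * summand (n + 1) k -
      (1 - X ^ (2 * n + 1)) * (1 - X ^ (2 * n + 2)) ^ 2 * summand n k =
    certificate n (k + 1) - certificate n k := by
  obtain ⟨j, rfl⟩ := Nat.exists_eq_add_of_le h
  set A := qbinom (X ^ 2) (2 * k + j + k) k
  set B := qbinom X (2 * k + j + 1) (2 * k)
  have hA : qbinom (X ^ 2) (2 * k + j + 1 + k) k =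
      (1 - (X ^ 2) ^ (3 * k + j + 1)) / (1 - (X ^ 2) ^ (2 * k + j + 1)) * A := by
    rw [show 2 * k + j + 1 + k = 2 * k + j + k + 1 by ring,
      qbinom_succ_left _ (fun _ => one_sub_X_sq_pow_ne_zero) (by omega),
      show 2 * k + j + k + 1 - k = 2 * k + j + 1 by omega,
      show 2 * k + j + k + 1 = 3 * k + j + 1 by ring]
  have hA' : qbinom (X ^ 2) (2 * k + j + (k + 1)) (k + 1) =
      (1 - (X ^ 2) ^ (3 * k + j + 1)) / (1 - (X ^ 2) ^ (k + 1)) * A := by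
    rw [show 2 * k + j + (k + 1) = 2 * k + j + k + 1 by ring, qbinom_succ_succ,
      show 2 * k + j + k + 1 = 3 * k + j + 1 by ring]
  have hB : qbinom X (2 * k + j + 1) (2 * k + 1) =
      B * (1 - X ^ (j + 1)) / (1 - X ^ (2 * k + 1)) := by
    rw [qbinom_succ_right, show 2 * k + j + 1 - 2 * k = j + 1 by omega]
  have hB' : qbinom X (2 * k + j + 1) (2 * (k + 1)) =
      B * (1 - X ^ (j + 1)) / (1 - X ^ (2 * k + 1)) * (1 - X ^ j) / (1 - X ^ (2 * k + 2)) := by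
    rw [mul_add, mul_one, qbinom_succ_right, hB, show 2 * k + j + 1 - (2 * k + 1) = j by omega]
  have hB'' : qbinom X (2 * k + j + 1 + 1) (2 * k + 1) =
      (1 - X ^ (2 * k + j + 2)) / (1 - X ^ (2 * k + 1)) * B :=
    qbinom_succ_succ _ _ _
  rw [summand, summand, certificate, certificate, hA, hA', hB, hB', hB'',
    show 2 * k + j + 1 - 2 * k = j + 1 by omega, show 2 * k + j - 2 * k = j by omega,
    show 2 * k + j + 2 - 2 * (k + 1) = j by omega, show 2 * k + j + 2 - 2 * k = j + 2 by omega,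
    succ_choose_two, succ_choose_two, succ_choose_two]
  have h₁ := one_sub_X_pow_ne_zero (K := ℚ) (m := 2 * k + 1) (by omega)
  have h₂ := one_sub_X_pow_ne_zero (K := ℚ) (m := 2 * k + 2) (by omega)
  have h₃ := one_sub_X_sq_pow_ne_zero (K := ℚ) (m := 2 * k + j + 1) (by omega)
  have h₄ := one_sub_X_sq_pow_ne_zero (K := ℚ) (m := k + 1) (by omega)
  field_simp
  ring

theorem telescoping_of_two_mul_eq_succ {n k : ℕ} (h : n + 1 = 2 * k) :
    (1 - X ^ (n + 1)) ^ 2 * (1 - X ^ (2 * n + 2)) * summand (n + 1) k -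
      (1 - X ^ (2 * n + 1)) * (1 - X ^ (2 * n + 2)) ^ 2 * summand n k =
    certificate n (k + 1) - certificate n k := by
  rw [summand_eq_zero (by omega : n < 2 * k),
    certificate_eq_zero (by omega : n + 1 < 2 * (k + 1))]
  obtain ⟨m, rfl⟩ : ∃ m, k = m + 1 := ⟨k - 1, by omega⟩
  obtain rfl : n = 2 * m + 1 := by omega
  have hA : qbinom (X ^ 2) (2 * m + 1 + 1 + (m + 1)) (m + 1) =
      (1 - (X ^ 2) ^ (3 * m + 3)) / (1 - (X ^ 2) ^ (2 * m + 2)) *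
        qbinom (X ^ 2) (2 * m + 1 + (m + 1)) (m + 1) := by
    rw [show 2 * m + 1 + 1 + (m + 1) = 2 * m + 1 + (m + 1) + 1 by ring,
      qbinom_succ_left _ (fun _ => one_sub_X_sq_pow_ne_zero) (by omega),
      show 2 * m + 1 + (m + 1) + 1 - (m + 1) = 2 * m + 2 by omega,
      show 2 * m + 1 + (m + 1) + 1 = 3 * m + 3 by ring]
  have hB : qbinom X (2 * m + 1 + 1 + 1) (2 * (m + 1) + 1) =
      qbinom X (2 * m + 1 + 1) (2 * (m + 1)) := by
    rw [show 2 * (m + 1) = 2 * m + 1 + 1 by ring]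
    exact qbinom_succ_self X (one_sub_X_pow_ne_zero (by omega))
  rw [summand, certificate, hA, hB, show 2 * m + 1 + 1 - 2 * (m + 1) = 0 by omega,
    show 2 * m + 1 + 2 - 2 * (m + 1) = 1 by omega, Nat.choose_eq_zero_of_lt (by omega : 0 < 2),
    Nat.choose_eq_zero_of_lt (by omega : 1 < 2)]
  have h₂ := one_sub_X_sq_pow_ne_zero (K := ℚ) (m := 2 * m + 2) (by omega)
  field_simp
  ring

theorem summand_telescoping (n k : ℕ) :
    (1 - X ^ (n + 1)) ^ 2 * (1 - X ^ (2 * n + 2)) * summand (n + 1) k -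
      (1 - X ^ (2 * n + 1)) * (1 - X ^ (2 * n + 2)) ^ 2 * summand n k =
    certificate n (k + 1) - certificate n k := by
  -- at `2 * k = n + 1` the truncated `n - 2 * k` breaks the closed forms of the generic case
  rcases lt_trichotomy (2 * k) (n + 1) with h | h | h
  · exact telescoping_of_two_mul_le (by omega)
  · exact telescoping_of_two_mul_eq_succ h.symm
  · rw [summand_eq_zero (by omega), summand_eq_zero (by omega), certificate_eq_zero (by omega),
      certificate_eq_zero h]
    ring

theorem sum_summand_recurrence (n : ℕ) :
    (1 - X ^ (n + 1)) ^ 2 * ∑ k ∈ range (n + 2), summand (n + 1) k =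
      (1 - X ^ (2 * n + 1)) * (1 - X ^ (2 * n + 2)) * ∑ k ∈ range (n + 2), summand n k := by
  have htel : ∑ k ∈ range (n + 2), (certificate n (k + 1) - certificate n k) = 0 := by
    rw [sum_range_sub, certificate_eq_zero (by omega), certificate_zero_right, sub_self]
  simp only [← summand_telescoping, sum_sub_distrib, ← mul_sum, sub_eq_zero] at htel
  refine mul_left_cancel₀ (one_sub_X_pow_ne_zero (K := ℚ) (m := 2 * n + 2) (by omega)) ?_
  linear_combination htel

theorem qbinom_central_recurrence (n : ℕ) :
    (1 - X ^ (n + 1)) ^ 2 * qbinom X (2 * (n + 1)) (n + 1) =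
      (1 - X ^ (2 * n + 1)) * (1 - X ^ (2 * n + 2)) * qbinom X (2 * n) n := by
  rw [show 2 * (n + 1) = 2 * n + 1 + 1 by ring, qbinom_succ_succ,
    qbinom_succ_left _ (fun _ => one_sub_X_pow_ne_zero) (by omega),
    show 2 * n + 1 - n = n + 1 by omega]
  have := one_sub_X_pow_ne_zero (K := ℚ) (m := n + 1) (by omega)
  field_simp

theorem sum_summand_eq_qbinom_central (n : ℕ) :
    ∑ k ∈ range (n + 1), summand n k = qbinom X (2 * n) n := by
  induction n with
  | zero =>
    rw [sum_range_one, summand, qbinom_succ_self X (one_sub_X_pow_ne_zero one_ne_zero)]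
    simp [qbinom]
  | succ n ih =>
    have := one_sub_X_pow_ne_zero (K := ℚ) (m := n + 1) (by omega)
    refine mul_left_cancel₀ (pow_ne_zero 2 this) ?_
    rw [sum_summand_recurrence, qbinom_central_recurrence, sum_range_succ _ (n + 1),
      summand_eq_zero (by omega), add_zero, ih]

end QSun

theorem q_sun_special1 (n : ℕ) :
    ∑ k ∈ range (n / 2 + 1),
      qbinom (RatFunc.X ^ 2) (n + k) k * qbinom RatFunc.X (n + 1) (2 * k + 1) *
        RatFunc.X ^ ((n - 2 * k).choose 2) =
    qbinom RatFunc.X (2 * n) n := by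
  rw [← QSun.sum_summand_eq_qbinom_central]
  refine sum_subset (range_subset_range.2 (by omega)) fun k hk hk' => QSun.summand_eq_zero ?_
  simp only [mem_range] at hk hk'
  omega
end

section
/- For all nonnegative integers m and n, the signed sum over pairs (λ, μ) of partitions with largest parts at most m+1 satisfying 2ℓ(λ) + ℓ(μ) = n of (-1)^{ℓ(λ)} q^{2|λ|+|μ|} equals the sum over pairs (τ, μ) with τ a partition and μ a partition into distinct parts, both with largest part at most m+1 and 4ℓ(τ) + ℓ(μ) = n, of q^{4|τ|+|μ|}. -/
/-!
Let `z` mark the number of parts. Partitions with parts `≤ M` have generating function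
`∏_{j ≤ M} (1 - z q^j)⁻¹` and partitions into distinct parts `≤ M` have `∏_{j ≤ M} (1 + z q^j)`,
so the two sides are the coefficients of `z^n` in `∏_{j ≤ M} (1 + z² q^{2j})⁻¹ (1 - z q^j)⁻¹` and
in `∏_{j ≤ M} (1 - z⁴ q^{4j})⁻¹ (1 + z q^j)`. These agree factor by factor because
`(1 + t²)(1 - t)(1 + t) = 1 - t⁴`.
-/

open Finset PowerSeries

namespace PowerSeries

variable {R : Type*} [CommRing R]

theorem rescale_C (a c : R) : rescale a (C c) = C c := by
  ext (_ | n) <;> simp [coeff_C]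

theorem coeff_expand_mul_eq_sum {c : ℕ} (hc : c ≠ 0) (f g : R⟦X⟧) (n : ℕ) :
    coeff n (expand c hc f * g) = ∑ k ∈ range (n / c + 1), coeff k f * coeff (n - c * k) g := by
  have hle {k : ℕ} : k < n / c + 1 ↔ c * k ≤ n := by
    rw [Nat.lt_succ_iff, Nat.le_div_iff_mul_le (Nat.pos_of_ne_zero hc), mul_comm]
  rw [coeff_mul, eq_comm]
  refine sum_of_injOn (fun k => (c * k, n - c * k)) ?_ ?_ ?_ ?_
  · intro a _ b _ h
    exact mul_left_cancel₀ hc (congrArg Prod.fst h)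
  · intro k hk
    simp only [coe_range, Set.mem_Iio, hle] at hk
    simp [HasAntidiagonal.mem_antidiagonal, hk]
  · rintro ⟨i, j⟩ hij hnot
    rw [coeff_expand, ite_mul, zero_mul, ite_eq_right_iff]
    rintro ⟨k, rfl⟩
    rw [HasAntidiagonal.mem_antidiagonal] at hij
    exact absurd ⟨k, by rw [mem_coe, mem_range, hle]; omega, by simp [← hij]⟩ hnot
  · intro k _
    rw [coeff_expand_mul]

end PowerSeries

theorem mul_eq_mul_of_one_sub_pow_four {S : Type*} [CommRing S] {a a' b b' c c' d d' t : S}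
    (ht : IsUnit (1 - t ^ 4)) (ha : a' * (1 + t ^ 2) = a) (hb : b' * (1 - t) = b)
    (hc : c' * (1 - t ^ 4) = c) (hd : d' = d * (1 + t)) (h : a * b = c * d) :
    a' * b' = c' * d' := by
  rw [← ht.mul_left_inj]
  linear_combination (b' * (1 - t) * (1 + t)) * ha + (a * (1 + t)) * hb + (1 + t) * h - c * hd
    - d' * hc

section BoundedPartitions

variable {R : Type*} [CommRing R] (r : ℕ → ℕ → Prop) [DecidableRel r]

-- Parts are listed in decreasing order: `r = (· ≤ ·)` gives the partitions into `k` parts `≤ M`,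
-- `r = (· < ·)` those into distinct parts.
def boundedPartitions (M k : ℕ) : Finset (Fin k → ℕ) :=
  {p ∈ Fintype.piFinset fun _ => Icc 1 M | ∀ i j, i < j → r (p j) (p i)}

def boundedPartitionPoly (q : R) (M k : ℕ) : R :=
  ∑ p ∈ boundedPartitions r M k, q ^ ∑ i, p i

noncomputable def boundedPartitionSeries (q : R) (M : ℕ) : R⟦X⟧ :=
  mk (boundedPartitionPoly r q M)

variable {r}

theorem cons_mem_boundedPartitions {M k a : ℕ} {g : Fin k → ℕ} :
    (Fin.cons a g : Fin (k + 1) → ℕ) ∈ boundedPartitions r M (k + 1) ↔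
      a ∈ Icc 1 M ∧ (∀ i, r (g i) a) ∧ g ∈ boundedPartitions r M k := by
  simp only [boundedPartitions, mem_filter, Fintype.mem_piFinset, Fin.forall_fin_succ,
    Fin.cons_zero, Fin.cons_succ, Fin.succ_pos, Fin.not_lt_zero,
    Fin.succ_lt_succ_iff, IsEmpty.forall_iff, forall_const, true_and]
  tauto

theorem boundedPartitionPoly_zero_right (q : R) (M : ℕ) : boundedPartitionPoly r q M 0 = 1 := by
  simp [boundedPartitionPoly, boundedPartitions]

theorem boundedPartitionPoly_zero_succ (q : R) (k : ℕ) :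
    boundedPartitionPoly r q 0 (k + 1) = 0 := by
  simp [boundedPartitionPoly, boundedPartitions]

theorem filter_boundedPartitions_succ_ne (hr : ∀ a b, r a b → a ≤ b) (M k : ℕ) :
    {p ∈ boundedPartitions r (M + 1) (k + 1) | ¬p 0 = M + 1} = boundedPartitions r M (k + 1) := by
  ext p
  simp only [boundedPartitions, mem_filter, Fintype.mem_piFinset, mem_Icc]
  constructor
  · rintro ⟨⟨hbound, hchain⟩, htop⟩
    refine ⟨fun i => ⟨(hbound i).1, ?_⟩, hchain⟩
    have hle : p i ≤ p 0 := (Fin.zero_le i).eq_or_lt.elim (fun h => h ▸ le_rfl)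
      fun h => hr _ _ (hchain _ _ h)
    have := (hbound 0).2
    omega
  · rintro ⟨hbound, hchain⟩
    have := (hbound 0).2
    exact ⟨⟨fun i => ⟨(hbound i).1, (hbound i).2.trans M.le_succ⟩, hchain⟩, by omega⟩

theorem boundedPartitionPoly_succ_succ (hr : ∀ a b, r a b → a ≤ b) (q : R) (M k : ℕ) :
    boundedPartitionPoly r q (M + 1) (k + 1) =
      q ^ (M + 1) * ∑ p ∈ boundedPartitions r (M + 1) k with ∀ i, r (p i) (M + 1), q ^ ∑ i, p i
        + boundedPartitionPoly r q M (k + 1) := by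
  rw [boundedPartitionPoly, ← sum_filter_add_sum_filter_not _ (fun p => p 0 = M + 1),
    filter_boundedPartitions_succ_ne hr, mul_sum]
  congr 1
  refine sum_nbij' Fin.tail (fun g => Fin.cons (M + 1) g) ?_ ?_ ?_ ?_ ?_
  · intro p hp
    obtain ⟨hp, htop⟩ := mem_filter.mp hp
    rw [← Fin.cons_self_tail p, htop, cons_mem_boundedPartitions] at hp
    simpa using ⟨hp.2.2, hp.2.1⟩
  · intro g hg
    rw [mem_filter] at hg ⊢
    simpa [cons_mem_boundedPartitions] using hg.symm
  · intro p hp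
    simp [← (mem_filter.mp hp).2]
  · intro g _
    simp
  · intro p hp
    rw [← Fin.cons_self_tail p, Fin.sum_cons, (mem_filter.mp hp).2, pow_add]
    simp

theorem boundedPartitionSeries_zero (q : R) : boundedPartitionSeries r q 0 = 1 := by
  ext (_ | k) <;> simp [boundedPartitionSeries, boundedPartitionPoly_zero_right,
    boundedPartitionPoly_zero_succ, coeff_one]

theorem boundedPartitionPoly_le_succ_succ (q : R) (M k : ℕ) :
    boundedPartitionPoly (· ≤ ·) q (M + 1) (k + 1) =
      q ^ (M + 1) * boundedPartitionPoly (· ≤ ·) q (M + 1) k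
        + boundedPartitionPoly (· ≤ ·) q M (k + 1) := by
  have hbounded : ∀ p ∈ boundedPartitions (· ≤ ·) (M + 1) k, ∀ i, p i ≤ M + 1 := by
    intro p hp i
    simp only [boundedPartitions, mem_filter, Fintype.mem_piFinset, mem_Icc] at hp
    exact (hp.1 i).2
  rw [boundedPartitionPoly_succ_succ fun _ _ => id, filter_true_of_mem hbounded]
  rfl

theorem boundedPartitionPoly_lt_succ_succ (q : R) (M k : ℕ) :
    boundedPartitionPoly (· < ·) q (M + 1) (k + 1) =
      q ^ (M + 1) * boundedPartitionPoly (· < ·) q M k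
        + boundedPartitionPoly (· < ·) q M (k + 1) := by
  have hbelow : {p ∈ boundedPartitions (· < ·) (M + 1) k | ∀ i, p i < M + 1} =
      boundedPartitions (· < ·) M k := by
    ext p
    simp only [boundedPartitions, mem_filter, Fintype.mem_piFinset, mem_Icc, Order.lt_add_one_iff]
    grind
  rw [boundedPartitionPoly_succ_succ fun _ _ => le_of_lt, hbelow]
  rfl

theorem boundedPartitionSeries_le_succ_mul (q : R) (M : ℕ) :
    boundedPartitionSeries (· ≤ ·) q (M + 1) * (1 - C (q ^ (M + 1)) * X) =
      boundedPartitionSeries (· ≤ ·) q M := by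
  ext (_ | k)
  · simp [boundedPartitionSeries, boundedPartitionPoly_zero_right]
  · rw [mul_sub, mul_one, ← mul_assoc, map_sub, coeff_succ_mul_X, coeff_mul_C]
    simp only [boundedPartitionSeries, coeff_mk, boundedPartitionPoly_le_succ_succ]
    ring

theorem boundedPartitionSeries_lt_succ (q : R) (M : ℕ) :
    boundedPartitionSeries (· < ·) q (M + 1) =
      boundedPartitionSeries (· < ·) q M * (1 + C (q ^ (M + 1)) * X) := by
  ext (_ | k)
  · simp [boundedPartitionSeries, boundedPartitionPoly_zero_right]
  · rw [mul_add, mul_one, ← mul_assoc, map_add, coeff_succ_mul_X, coeff_mul_C]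
    simp only [boundedPartitionSeries, coeff_mk, boundedPartitionPoly_lt_succ_succ]
    ring

theorem boundedPartitionPoly_eq_sum_fin {M k : ℕ} (Q : (Fin k → Fin M) → Prop) [DecidablePred Q]
    (hQ : ∀ f, Q f ↔ ∀ i j, i < j → r (f j + 1) (f i + 1)) (q : R) :
    boundedPartitionPoly r q M k = ∑ f with Q f, q ^ ∑ i, ((f i : ℕ) + 1) := by
  symm
  refine sum_nbij (fun f i => f i + 1) ?_ ?_ ?_ fun _ _ => rfl
  · intro f hf
    simp only [mem_filter, mem_univ, true_and, hQ] at hf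
    simp only [boundedPartitions, mem_filter, Fintype.mem_piFinset, mem_Icc]
    exact ⟨fun i => ⟨Nat.le_add_left _ _, (f i).isLt⟩, hf⟩
  · intro f _ g _ h
    funext i
    exact Fin.ext (Nat.add_right_cancel (congrFun h i))
  · intro p hp
    simp only [boundedPartitions, mem_coe, mem_filter, Fintype.mem_piFinset, mem_Icc] at hp
    have hshift i : p i - 1 + 1 = p i := Nat.sub_add_cancel (hp.1 i).1
    refine ⟨fun i => ⟨p i - 1, by have := hp.1 i; omega⟩, ?_, funext hshift⟩
    simpa [hQ, hshift] using hp.2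

theorem boundedPartitionPoly_le_eq_sum_fin (q : R) (M k : ℕ) :
    boundedPartitionPoly (· ≤ ·) q M k =
      ∑ f : Fin k → Fin M with ∀ i j, i ≤ j → f j ≤ f i, q ^ ∑ i, ((f i : ℕ) + 1) := by
  refine boundedPartitionPoly_eq_sum_fin _ (fun f => ?_) q
  simp only [add_le_add_iff_right, Fin.val_fin_le]
  exact antitone_iff_forall_lt (f := f)

theorem boundedPartitionPoly_lt_eq_sum_fin (q : R) (M k : ℕ) :
    boundedPartitionPoly (· < ·) q M k =
      ∑ f : Fin k → Fin M with ∀ i j, i < j → f j < f i, q ^ ∑ i, ((f i : ℕ) + 1) :=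
  boundedPartitionPoly_eq_sum_fin _ (fun f => by simp [Fin.val_fin_lt]) q

end BoundedPartitions

theorem expand_rescale_partitionSeries_mul {R : Type*} [CommRing R] (q : R) (M : ℕ) :
    expand 2 two_ne_zero (rescale (-1) (boundedPartitionSeries (· ≤ ·) (q ^ 2) M)) *
        boundedPartitionSeries (· ≤ ·) q M =
      expand 4 four_ne_zero (boundedPartitionSeries (· ≤ ·) (q ^ 4) M) *
        boundedPartitionSeries (· < ·) q M := by
  induction M with
  | zero => simp [boundedPartitionSeries_zero]
  | succ M ih =>
    have hA := congrArg (expand 2 two_ne_zero ∘ rescale (-1))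
      (boundedPartitionSeries_le_succ_mul (q ^ 2) M)
    have hB := boundedPartitionSeries_le_succ_mul q M
    have hC := congrArg (expand 4 four_ne_zero) (boundedPartitionSeries_le_succ_mul (q ^ 4) M)
    have hD := boundedPartitionSeries_lt_succ q M
    simp only [Function.comp_apply, map_mul, map_sub, map_one, map_neg, map_pow, rescale_C,
      rescale_X, expand_C, expand_X] at hA hB hC hD
    have hunit : IsUnit (1 - (C q ^ (M + 1) * X) ^ 4 : R⟦X⟧) := by
      simp [isUnit_iff_constantCoeff]
    exact mul_eq_mul_of_one_sub_pow_four hunit (by linear_combination hA) (by linear_combination hB)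
      (by linear_combination hC) (by linear_combination hD) ih

/-- Partitions with `k` parts, each part in `[1, m+1]`, are encoded as antitone functions
`Fin k → Fin (m+1)` (part `i` being `f i + 1`); distinct-part partitions are strictly
decreasing.  The signed sum over pairs `(λ, μ)` of partitions with parts `≤ m+1` and
`2ℓ(λ) + ℓ(μ) = n` of `(-1)^{ℓ(λ)} q^{2|λ|+|μ|}` equals the sum over pairs `(τ, μ)` with
`τ` a partition, `μ` a distinct-part partition, parts `≤ m+1` and `4ℓ(τ) + ℓ(μ) = n`, of
`q^{4|τ|+|μ|}`. -/
theorem signed_partition_pairs (m n : ℕ) :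
    ∑ k ∈ range (n / 2 + 1),
      ∑ f ∈ {f : Fin k → Fin (m + 1) | ∀ i j : Fin k, i ≤ j → f j ≤ f i},
        ∑ g ∈ {g : Fin (n - 2 * k) → Fin (m + 1) |
                ∀ i j : Fin (n - 2 * k), i ≤ j → g j ≤ g i},
          ((-1 : RatFunc ℚ) ^ k *
            RatFunc.X ^ (2 * (∑ i, ((f i : ℕ) + 1)) + ∑ i, ((g i : ℕ) + 1))) =
    ∑ k ∈ range (n / 4 + 1),
      ∑ f ∈ {f : Fin k → Fin (m + 1) | ∀ i j : Fin k, i ≤ j → f j ≤ f i},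
        ∑ g ∈ {g : Fin (n - 4 * k) → Fin (m + 1) |
                ∀ i j : Fin (n - 4 * k), i < j → g j < g i},
          (RatFunc.X : RatFunc ℚ) ^ (4 * (∑ i, ((f i : ℕ) + 1)) + ∑ i, ((g i : ℕ) + 1)) := by
  have key := congrArg (coeff n)
    (expand_rescale_partitionSeries_mul (RatFunc.X : RatFunc ℚ) (m + 1))
  simp only [coeff_expand_mul_eq_sum, coeff_rescale, boundedPartitionSeries, coeff_mk,
    boundedPartitionPoly_le_eq_sum_fin, boundedPartitionPoly_lt_eq_sum_fin] at key
  convert key using 2 with k - k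
  · rw [mul_assoc, sum_mul_sum, mul_sum]
    simp only [← pow_mul, ← pow_add, mul_sum]
  · rw [sum_mul_sum]
    simp only [← pow_mul, ← pow_add]
end
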